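/- Let A be a unital complex Banach *-algebra, regarded as a Jordan Banach triple with triple product {a,b,c} = (a b* c + c b* a)/2. Every continuous ternary derivation δ : A → A* satisfies δ(1)* = −δ(1), that is, the conjugate of δ(1)(a*) equals −δ(1)(a) for every a ∈ A. -/
import Mathlib


/-!
STATEMENT 5: Let `A` be a unital complex Banach `*`-algebra, regarded as a Jordan
Banach triple with `{a,b,c} = (a b* c + c b* a)/2`.  Every continuous (conjugate-linear)
ternary derivation `δ : A → A*` satisfies `δ(1)* = −δ(1)`, i.e.
`conj (δ(1)(a*)) = −δ(1)(a)` for every `a ∈ A`.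
-/

open scoped ComplexConjugate

noncomputable section

variable {A : Type*} [NormedRing A] [NormedAlgebra ℂ A] [CompleteSpace A]
  [StarRing A] [StarModule ℂ A] [NormedStarGroup A]

/-- The triple product `{a,b,c} = (a b* c + c b* a)/2`. -/
def jtrip (a b c : A) : A := (2 : ℂ)⁻¹ • (a * star b * c + c * star b * a)

/-- `δ : A → A*` (continuous, conjugate-linear) is a ternary derivation:
`δ{a,b,c} = {δ(a),b,c} + {a,δ(b),c} + {a,b,δ(c)}`, written out pointwise on `A*`,
where `{a,b,φ}(x) = {φ,b,a}(x) := φ({b,a,x})` and `{a,φ,b}(x) := conj (φ({a,x,b}))`. -/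
def IsTernaryDer (δ : A →L⋆[ℂ] (A →L[ℂ] ℂ)) : Prop :=
  ∀ a b c x : A, δ (jtrip a b c) x
    = δ a (jtrip b c x) + conj (δ b (jtrip a x c)) + δ c (jtrip b a x)

/-- Every continuous ternary derivation `δ : A → A*` on a unital complex Banach
`*`-algebra satisfies `δ(1)* = −δ(1)`. -/
theorem ternaryDer_one_star_antisymm
    (δ : A →L⋆[ℂ] (A →L[ℂ] ℂ)) (hδ : IsTernaryDer δ) (a : A) :
    conj (δ 1 (star a)) = - δ 1 a := by
  have h := hδ 1 1 1 a
  have h1 : jtrip (1 : A) 1 1 = 1 := by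
    simp [jtrip, smul_add]
    rw [← add_smul]; norm_num
  have h2 : jtrip (1 : A) 1 a = a := by
    simp [jtrip, smul_add]
    rw [← add_smul]; norm_num
  have h3 : jtrip (1 : A) a 1 = star a := by
    simp [jtrip, smul_add]
    rw [← add_smul]; norm_num
  rw [h1, h2, h3] at h
  linear_combination -h
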